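/- Conversely, any linear map W : ℝ^X → ℝ^G that is G-equivariant (with respect to the action (h·f)(x)=f(h⁻¹x) on ℝ^X and left translation on ℝ^G) is a G-cross-correlation: there exists v ∈ ℝ^X such that (Wf)(g) = Σ_{x∈X} f(x)v(g⁻¹x) for all f and g, namely v(x) = W(e, x) where e is the identity of G. -/

import Mathlib

/-! Equivariance with `h = g` moves the evaluation point `g` to the identity, where `W *ᵥ f`
is the dot product of the row `W 1` with the translate `x ↦ f (g • x)`; reindexing the sum by
`x ↦ g⁻¹ • x` turns it into the cross-correlation of `f` with the filter `W 1`. -/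

section CrossCorrelation

variable {G X R : Type*} [Group G] [Fintype X] [MulAction G X] [CommSemiring R]

theorem sum_mul_comp_smul (u f : X → R) (g : G) :
    ∑ x, u x * f (g • x) = ∑ x, f x * u (g⁻¹ • x) := by
  rw [← Equiv.sum_comp (MulAction.toPerm g⁻¹)]
  simp only [MulAction.toPerm_apply, smul_inv_smul, mul_comm]

theorem Matrix.mulVec_apply_eq_mulVec_smul_one {W : Matrix G X R}
    (hequiv : ∀ (h : G) (f : X → R) (g : G),
      W.mulVec (fun x => f (h⁻¹ • x)) g = W.mulVec f (h⁻¹ * g))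
    (f : X → R) (g : G) :
    W.mulVec f g = W.mulVec (fun x => f (g • x)) 1 := by
  have h := hequiv g (fun x => f (g • x)) g
  simp only [smul_inv_smul, inv_mul_cancel] at h
  exact h

end CrossCorrelation

theorem stmt_9_general (G X : Type*) [Group G] [Fintype X] [MulAction G X]
    (W : Matrix G X ℝ)
    (hequiv : ∀ (h : G) (f : X → ℝ) (g : G),
      W.mulVec (fun x => f (h⁻¹ • x)) g = W.mulVec f (h⁻¹ * g)) :
    ∃ v : X → ℝ, (∀ x : X, v x = W 1 x) ∧
      ∀ (f : X → ℝ) (g : G), W.mulVec f g = ∑ x : X, f x * v (g⁻¹ • x) := by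
  refine ⟨W 1, fun _ => rfl, fun f g => ?_⟩
  rw [W.mulVec_apply_eq_mulVec_smul_one hequiv f g, Matrix.mulVec, dotProduct]
  exact sum_mul_comp_smul (W 1) f g

/-- any `G`-equivariant linear map `W : ℝ^X → ℝ^G` is a
`G`-cross-correlation with filter `v x = W (e, x)`, `e` the identity of `G`. -/
theorem stmt_9 (G X : Type*) [Group G] [Fintype G] [Fintype X] [MulAction G X]
    (W : Matrix G X ℝ)
    (hequiv : ∀ (h : G) (f : X → ℝ) (g : G),
      W.mulVec (fun x => f (h⁻¹ • x)) g = W.mulVec f (h⁻¹ * g)) :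
    ∃ v : X → ℝ, (∀ x : X, v x = W 1 x) ∧
      ∀ (f : X → ℝ) (g : G), W.mulVec f g = ∑ x : X, f x * v (g⁻¹ • x) :=
  stmt_9_general G X W hequiv
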